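/- β-β achievability bound: for every channel P_{Y|X}: A → B, every ε ∈ (0,1), every input distribution P_X on A, every τ ∈ (0,ε), every auxiliary distribution Q_Y on B, and every positive integer M with M/2 ≤ β_τ(P_Y, Q_Y) / β_{1−ε+τ}(P_{XY}, P_X × Q_Y), there exists an encoder f: {1,...,M} → A and decoder g: B → {1,...,M} ∪ {e} whose average probability of error is at most ε. -/

import Mathlib

open MeasureTheory

noncomputable def beta {W : Type*} [MeasurableSpace W] (α : ℝ) (P Q : MeasureTheory.Measure W) : ℝ :=
  sInf {b : ℝ | ∃ T : W → ℝ, Measurable T ∧ (∀ w, T w ∈ Set.Icc (0:ℝ) 1) ∧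
    α ≤ ∫ w, T w ∂P ∧ b = ∫ w, T w ∂Q}

/-- Average error probability of the code `(f, g)` over the channel `κ`
(`g y = none` represents the error symbol `e`). -/
noncomputable def avgError {A B : Type*} [MeasurableSpace A] [MeasurableSpace B]
    (κ : ProbabilityTheory.Kernel A B) (M : ℕ) (f : Fin M → A)
    (g : B → Option (Fin M)) : ℝ :=
  (1 / (M : ℝ)) * ∑ j : Fin M, (1 - (κ (f j) {y | g y = some j}).toReal)


instance {M : ℕ} : MeasurableSpace (Fin M) := ⊤
instance {M : ℕ} : MeasurableSpace (Option (Fin M)) := ⊤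

/-!
Random coding with a sequential threshold decoder. Draw the codewords i.i.d. from `P_X` and, for a
decision region `D ⊆ A × B`, decode `y` to the least `j` with `(c j, y) ∈ D`. Message `j` fails
when `(c j, y) ∉ D`, which has probability `P_{XY}(Dᶜ)`, or when one of the `j` earlier codewords,
independent of `(c j, y)`, is accepted, which has probability at most `min 1 (j P_X(D_y))` with
`y ∼ P_Y`. Averaging over `j` bounds the error by `P_{XY}(Dᶜ) + E_{P_Y} min 1 ((M-1)/2 P_X(D_y))`.

Now take a test `T` for `β_{1-ε+τ}(P_{XY}, P_X × Q_Y)` with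
`(M-1)/2 E_{P_X × Q_Y} T < β_τ(P_Y, Q_Y)`, and `D = {T > t}` for a uniform threshold `t ∈ (0,1)`.
On average over `t` the first term is at most `1 - E_{P_{XY}} T ≤ ε - τ`, and the second is at most
`E_{P_Y} U` for the test `U y = min 1 ((M-1)/2 E_{P_X} T(·, y))`. Its `Q_Y`-mean is below
`β_τ(P_Y, Q_Y)`, so its `P_Y`-mean is at most `τ`: otherwise a rescaling of `U` would beat `β_τ`.
-/

open Set
open ProbabilityTheory (Kernel IsMarkovKernel)
open scoped ProbabilityTheory
open scoped ENNReal

section Tests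

variable {W : Type*} [MeasurableSpace W] {α : ℝ} {P Q : Measure W} {T : W → ℝ}

lemma beta_nonneg : 0 ≤ beta α P Q :=
  Real.sInf_nonneg fun _ ⟨_, _, hT01, _, hb⟩ => hb ▸ integral_nonneg fun w => (hT01 w).1

lemma beta_le_integral (hT : Measurable T) (hT01 : ∀ w, T w ∈ Icc (0 : ℝ) 1)
    (hα : α ≤ ∫ w, T w ∂P) : beta α P Q ≤ ∫ w, T w ∂Q :=
  csInf_le ⟨0, fun _ ⟨_, _, hT01, _, hb⟩ => hb ▸ integral_nonneg fun w => (hT01 w).1⟩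
    ⟨T, hT, hT01, hα, rfl⟩

lemma exists_test_mul_integral_lt [IsProbabilityMeasure P] {k c : ℝ} (hk : 0 ≤ k) (hα : α ≤ 1)
    (h : k * beta α P Q < c) :
    ∃ T : W → ℝ, Measurable T ∧ (∀ w, T w ∈ Icc (0 : ℝ) 1) ∧ α ≤ ∫ w, T w ∂P ∧
      k * ∫ w, T w ∂Q < c := by
  have hne : {b : ℝ | ∃ T : W → ℝ, Measurable T ∧ (∀ w, T w ∈ Icc (0 : ℝ) 1) ∧
      α ≤ ∫ w, T w ∂P ∧ b = ∫ w, T w ∂Q}.Nonempty :=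
    ⟨_, fun _ => 1, measurable_const, fun _ => ⟨zero_le_one, le_rfl⟩, by simpa using hα, rfl⟩
  set d := c - k * beta α P Q
  have hd : 0 < d := sub_pos.2 h
  obtain ⟨_, ⟨T, hT, hT01, hTP, rfl⟩, hlt⟩ :=
    Real.lt_sInf_add_pos hne (div_pos hd (by linarith : 0 < k + 1))
  refine ⟨T, hT, hT01, hTP, ?_⟩
  have hkd : k * (d / (k + 1)) < d := by
    rw [mul_div_assoc', div_lt_iff₀ (by linarith)]
    nlinarith
  have : k * ∫ w, T w ∂Q ≤ k * (beta α P Q + d / (k + 1)) := mul_le_mul_of_nonneg_left hlt.le hk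
  linarith

lemma integral_le_of_integral_lt_beta {τ : ℝ} (hτ : 0 ≤ τ) {U : W → ℝ} (hU : Measurable U)
    (hU01 : ∀ w, U w ∈ Icc (0 : ℝ) 1) (h : ∫ w, U w ∂Q < beta τ P Q) : ∫ w, U w ∂P ≤ τ := by
  by_contra! hlt
  have hp : 0 < ∫ w, U w ∂P := hτ.trans_lt hlt
  set a := τ / ∫ w, U w ∂P
  have ha : a ∈ Icc (0 : ℝ) 1 := ⟨by positivity, (div_le_one hp).2 hlt.le⟩
  have hβ : beta τ P Q ≤ a * ∫ w, U w ∂Q := by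
    rw [← integral_const_mul]
    refine beta_le_integral (hU.const_mul a)
      (fun w => ⟨mul_nonneg ha.1 (hU01 w).1, mul_le_one₀ ha.2 (hU01 w).1 (hU01 w).2⟩) ?_
    rw [integral_const_mul, div_mul_cancel₀ _ hp.ne']
  have := mul_le_of_le_one_left (integral_nonneg (μ := Q) fun w => (hU01 w).1) ha.2
  linarith

lemma lintegral_le_of_lintegral_lt_beta [IsFiniteMeasure P] {τ : ℝ} (hτ : 0 ≤ τ)
    {U : W → ℝ≥0∞} (hU : Measurable U) (hU1 : ∀ w, U w ≤ 1)
    (h : ∫⁻ w, U w ∂Q < ENNReal.ofReal (beta τ P Q)) : ∫⁻ w, U w ∂P ≤ ENNReal.ofReal τ := by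
  have htoReal (ν : Measure W) : ∫ w, (U w).toReal ∂ν = (∫⁻ w, U w ∂ν).toReal :=
    integral_toReal hU.aemeasurable (ae_of_all _ fun w => (hU1 w).trans_lt ENNReal.one_lt_top)
  have hP : ∫⁻ w, U w ∂P ≠ ∞ :=
    ((lintegral_mono hU1).trans_lt (by simp [measure_lt_top])).ne
  rw [ENNReal.le_ofReal_iff_toReal_le hP hτ, ← htoReal]
  refine integral_le_of_integral_lt_beta (Q := Q) hτ hU.ennreal_toReal (fun w =>
    ⟨ENNReal.toReal_nonneg,
      ENNReal.toReal_le_of_le_ofReal zero_le_one ((hU1 w).trans_eq ENNReal.ofReal_one.symm)⟩) ?_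
  rw [htoReal]
  exact ENNReal.toReal_lt_of_lt_ofReal h

lemma integrable_of_mem_Icc [IsFiniteMeasure P] (hT : Measurable T)
    (hT01 : ∀ w, T w ∈ Icc (0 : ℝ) 1) : Integrable T P :=
  .of_bound hT.aestronglyMeasurable 1
    (ae_of_all _ fun w => (Real.norm_of_nonneg (hT01 w).1).trans_le (hT01 w).2)

lemma lintegral_ofReal_one_sub [IsProbabilityMeasure P] (hT : Measurable T)
    (hT01 : ∀ w, T w ∈ Icc (0 : ℝ) 1) :
    ∫⁻ w, ENNReal.ofReal (1 - T w) ∂P = ENNReal.ofReal (1 - ∫ w, T w ∂P) := by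
  have hint : Integrable (fun w => 1 - T w) P :=
    (integrable_const 1).sub (integrable_of_mem_Icc hT hT01)
  rw [← ofReal_integral_eq_lintegral_ofReal hint (ae_of_all _ fun w => sub_nonneg.2 (hT01 w).2),
    integral_sub (integrable_const 1) (integrable_of_mem_Icc hT hT01)]
  simp

end Tests

section Threshold

variable {V W : Type*} [MeasurableSpace V] [MeasurableSpace W]

lemma lintegral_measure_setOf_comm {ρ : Measure V} {μ : Measure W} [SFinite ρ] [SFinite μ]
    {p : V → W → Prop} (hp : MeasurableSet {q : V × W | p q.1 q.2}) :
    ∫⁻ v, μ {w | p v w} ∂ρ = ∫⁻ w, ρ {v | p v w} ∂μ :=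
  (Measure.prod_apply hp).symm.trans (Measure.prod_apply_symm hp)

variable {μ : Measure W} [SFinite μ] {f : W → ℝ}

lemma setLIntegral_Ioo_measure_lt_le (hf : Measurable f) :
    ∫⁻ t in Ioo 0 1, μ {w | t < f w} ≤ ∫⁻ w, ENNReal.ofReal (f w) ∂μ := by
  rw [lintegral_measure_setOf_comm (p := fun t w => t < f w)
    (measurableSet_lt measurable_fst (hf.comp measurable_snd))]
  refine lintegral_mono fun w => ?_
  rw [Measure.restrict_apply' measurableSet_Ioo]
  calc volume ({t | t < f w} ∩ Ioo 0 1) ≤ volume (Ioo 0 (f w)) :=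
        measure_mono fun t ht => ⟨ht.2.1, ht.1⟩
    _ = ENNReal.ofReal (f w) := by simp [Real.volume_Ioo]

lemma setLIntegral_Ioo_measure_le_le (hf : Measurable f) :
    ∫⁻ t in Ioo 0 1, μ {w | f w ≤ t} ≤ ∫⁻ w, ENNReal.ofReal (1 - f w) ∂μ := by
  rw [lintegral_measure_setOf_comm (p := fun t w => f w ≤ t)
    (measurableSet_le (hf.comp measurable_snd) measurable_fst)]
  refine lintegral_mono fun w => ?_
  rw [Measure.restrict_apply' measurableSet_Ioo]
  calc volume ({t | f w ≤ t} ∩ Ioo 0 1) ≤ volume (Icc (f w) 1) :=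
        measure_mono fun t ht => ⟨ht.1, ht.2.2.le⟩
    _ = ENNReal.ofReal (1 - f w) := Real.volume_Icc

lemma lintegral_min_one_mul_le {ν : Measure V} [IsProbabilityMeasure ν] {r : ℝ≥0∞} (hr : r ≠ ∞)
    (g : V → ℝ≥0∞) : ∫⁻ v, min 1 (r * g v) ∂ν ≤ min 1 (r * ∫⁻ v, g v ∂ν) :=
  le_min ((lintegral_mono fun _ => min_le_left _ _).trans_eq (by simp))
    ((lintegral_mono fun _ => min_le_right _ _).trans_eq (lintegral_const_mul' r g hr))

end Threshold

section Product

variable {ι A B : Type*} [Fintype ι] [MeasurableSpace A] [MeasurableSpace B]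
  {μ : Measure A} [IsProbabilityMeasure μ]

theorem measurePreserving_update [DecidableEq ι] (j : ι) :
    MeasurePreserving (fun p : (ι → A) × A => Function.update p.1 j p.2)
      ((Measure.pi fun _ => μ).prod μ) (Measure.pi fun _ => μ) := by
  refine ⟨measurable_update', (Measure.pi_eq fun s hs => ?_).symm⟩
  have hpre : (fun p : (ι → A) × A => Function.update p.1 j p.2) ⁻¹' univ.pi s =
      univ.pi (Function.update s j univ) ×ˢ s j := by
    ext ⟨c, x⟩
    simp only [mem_preimage, mem_univ_pi, mem_prod]
    rw [Function.forall_update_iff (p := fun i y => y ∈ s i),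
      Function.forall_update_iff (p := fun i S => c i ∈ S)]
    simp [and_comm]
  rw [Measure.map_apply measurable_update' (MeasurableSet.univ_pi hs), hpre, Measure.prod_prod,
    Measure.pi_pi, Finset.prod_eq_mul_prod_sdiff_singleton_of_mem (Finset.mem_univ j),
    Finset.prod_eq_mul_prod_sdiff_singleton_of_mem (Finset.mem_univ j) fun i => μ (s i)]
  simp only [Function.update_self, measure_univ, one_mul]
  rw [mul_comm]
  congr 1
  refine Finset.prod_congr rfl fun i hi => ?_
  rw [Function.update_of_ne (by simpa using hi)]

lemma pi_setOf_exists_mem_le (s : Finset ι) {S : Set A} (hS : MeasurableSet S) :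
    Measure.pi (fun _ : ι => μ) {c | ∃ i ∈ s, c i ∈ S} ≤ min 1 (s.card * μ S) := by
  refine le_min prob_le_one ?_
  calc Measure.pi (fun _ : ι => μ) {c | ∃ i ∈ s, c i ∈ S}
      = Measure.pi (fun _ : ι => μ) (⋃ i ∈ s, Function.eval i ⁻¹' S) := by
        congr 1; ext; simp
    _ ≤ ∑ i ∈ s, Measure.pi (fun _ : ι => μ) (Function.eval i ⁻¹' S) :=
        measure_biUnion_finset_le _ _
    _ = s.card * μ S := by
        simp [fun i => (measurePreserving_eval (fun _ : ι => μ) i).measure_preimage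
          hS.nullMeasurableSet]

lemma lintegral_kernel_eval_pi_eq [DecidableEq ι] (κ : Kernel A B) [IsMarkovKernel κ] {j : ι}
    {E : Set ((ι → A) × B)} (hE : MeasurableSet E)
    (hEj : ∀ c x, Prod.mk (Function.update c j x) ⁻¹' E = Prod.mk c ⁻¹' E) :
    ∫⁻ c, κ (c j) (Prod.mk c ⁻¹' E) ∂(Measure.pi fun _ => μ) =
      ∫⁻ y, Measure.pi (fun _ => μ) {c | (c, y) ∈ E} ∂(κ ∘ₘ μ) := by
  have hF : Measurable fun c : ι → A => κ (c j) (Prod.mk c ⁻¹' E) :=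
    (κ.comap _ (measurable_pi_apply j)).measurable_kernel_prodMk_left hE
  have hG : Measurable fun p : (ι → A) × A => κ p.2 (Prod.mk p.1 ⁻¹' E) :=
    (κ.comap _ measurable_snd).measurable_kernel_prodMk_left
      (hE.preimage (measurable_fst.fst.prodMk measurable_snd))
  rw [← (measurePreserving_update j).lintegral_comp hF]
  simp only [Function.update_self, hEj]
  rw [lintegral_prod _ hG.aemeasurable]
  simp_rw [← Measure.bind_apply (hE.preimage measurable_prodMk_left) κ.aemeasurable]
  rw [← Measure.prod_apply hE, Measure.prod_apply_symm hE]
  rfl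

end Product

section Coding

variable {A B : Type*} {M : ℕ} {D : Set (A × B)}

open Classical in
noncomputable def seqDecoder (D : Set (A × B)) (c : Fin M → A) (y : B) : Option (Fin M) :=
  Fin.find? fun j => decide ((c j, y) ∈ D)

lemma compl_setOf_seqDecoder_eq_some_subset (c : Fin M → A) (j : Fin M) :
    {y | seqDecoder D c y = some j}ᶜ ⊆
      Prod.mk (c j) ⁻¹' Dᶜ ∪ {y | ∃ i ∈ Finset.Iio j, (c i, y) ∈ D} := by
  intro y hy
  contrapose! hy
  simp_all [seqDecoder]

variable [MeasurableSpace A] [MeasurableSpace B]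

open Classical in
lemma measurable_seqDecoder (hD : MeasurableSet D) (c : Fin M → A) :
    Measurable (seqDecoder D c) :=
  Measurable.of_discrete.comp <| measurable_pi_lambda _ fun _ =>
    (Measurable.of_discrete (f := fun p : Prop => decide p)).comp
      (measurableSet_setOfPred.1 (measurable_prodMk_left hD))

lemma avgError_le_of_sum_le (κ : Kernel A B) [IsMarkovKernel κ] (hM : 0 < M) {f : Fin M → A}
    {g : B → Option (Fin M)} (hg : Measurable g) {ε : ℝ} (hε : 0 ≤ ε)
    (h : ∑ j, κ (f j) {y | g y = some j}ᶜ ≤ M * ENNReal.ofReal ε) : avgError κ M f g ≤ ε := by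
  have hsum : ∑ j, (1 - (κ (f j) {y | g y = some j}).toReal) =
      (∑ j, κ (f j) {y | g y = some j}ᶜ).toReal := by
    rw [ENNReal.toReal_sum fun j _ => measure_ne_top _ _]
    refine Finset.sum_congr rfl fun j _ => ?_
    have hj : MeasurableSet {y | g y = some j} := hg (measurableSet_singleton (some j))
    rw [prob_compl_eq_one_sub hj,
      ENNReal.toReal_sub_of_le prob_le_one ENNReal.one_ne_top, ENNReal.toReal_one]
  rw [avgError, hsum, one_div, inv_mul_le_iff₀ (by positivity)]
  calc _ ≤ ((M : ℝ≥0∞) * ENNReal.ofReal ε).toReal := ENNReal.toReal_mono (by finiteness) h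
    _ = M * ε := by simp [hε]

lemma sum_fin_val_eq (M : ℕ) :
    ∑ j : Fin M, ((j : ℕ) : ℝ≥0∞) = M * ENNReal.ofReal (((M : ℝ) - 1) / 2) := by
  have h : ∑ j : Fin M, ((j : ℕ) : ℝ) = M * (((M : ℝ) - 1) / 2) := by
    rw [Fin.sum_univ_eq_sum_range (fun i => (i : ℝ))]
    induction M with
    | zero => simp
    | succ n ih => rw [Finset.sum_range_succ, ih]; push_cast; ring
  rw [← ENNReal.ofReal_natCast, ← ENNReal.ofReal_mul (by positivity), ← h,
    ENNReal.ofReal_sum_of_nonneg fun _ _ => by positivity]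
  simp

lemma sum_fin_min_one_le (M : ℕ) (a : ℝ≥0∞) :
    ∑ j : Fin M, min 1 ((j : ℕ) * a) ≤ M * min 1 (ENNReal.ofReal (((M : ℝ) - 1) / 2) * a) :=
  calc ∑ j : Fin M, min 1 ((j : ℕ) * a) ≤ min (∑ _j : Fin M, 1) (∑ j : Fin M, (j : ℕ) * a) :=
        le_min (Finset.sum_le_sum fun _ _ => min_le_left _ _)
          (Finset.sum_le_sum fun _ _ => min_le_right _ _)
    _ = M * min 1 (ENNReal.ofReal (((M : ℝ) - 1) / 2) * a) := by
        rw [← Finset.sum_mul, sum_fin_val_eq, mul_assoc, ← min_mul_mul_left, mul_one]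
        simp

/-- `(M - 1) / 2` is the average number of codewords that the sequential decoder tests before the
transmitted one. -/
noncomputable def seqDecodingBound (κ : Kernel A B) (PX : Measure A) (M : ℕ) (D : Set (A × B)) :
    ℝ≥0∞ :=
  (PX ⊗ₘ κ) Dᶜ +
    ∫⁻ y, min 1 (ENNReal.ofReal (((M : ℝ) - 1) / 2) * PX {x | (x, y) ∈ D}) ∂(κ ∘ₘ PX)

lemma measurableSet_exists_lt (hD : MeasurableSet D) (j : Fin M) :
    MeasurableSet {p : (Fin M → A) × B | ∃ i ∈ Finset.Iio j, (p.1 i, p.2) ∈ D} := by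
  have : {p : (Fin M → A) × B | ∃ i ∈ Finset.Iio j, (p.1 i, p.2) ∈ D} =
      ⋃ i ∈ Finset.Iio j, (fun p : (Fin M → A) × B => (p.1 i, p.2)) ⁻¹' D := by
    ext; simp
  rw [this]
  exact Finset.measurableSet_biUnion _ fun i _ =>
    hD.preimage ((measurable_pi_apply i).comp measurable_fst |>.prodMk measurable_snd)

variable (κ : Kernel A B)

noncomputable def seqDecoderErrorBound (D : Set (A × B)) (c : Fin M → A) (j : Fin M) : ℝ≥0∞ :=
  κ (c j) (Prod.mk (c j) ⁻¹' Dᶜ) + κ (c j) {y | ∃ i ∈ Finset.Iio j, (c i, y) ∈ D}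

lemma measure_compl_seqDecoder_le (c : Fin M → A) (j : Fin M) :
    κ (c j) {y | seqDecoder D c y = some j}ᶜ ≤ seqDecoderErrorBound κ D c j :=
  (measure_mono (compl_setOf_seqDecoder_eq_some_subset c j)).trans (measure_union_le _ _)

variable [IsMarkovKernel κ]

lemma measurable_seqDecoderErrorBound (hD : MeasurableSet D) (j : Fin M) :
    Measurable fun c => seqDecoderErrorBound κ D c j :=
  ((κ.measurable_kernel_prodMk_left hD.compl).comp (measurable_pi_apply j)).add
    ((κ.comap _ (measurable_pi_apply j)).measurable_kernel_prodMk_left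
      (measurableSet_exists_lt hD j))

variable (PX : Measure A) [IsProbabilityMeasure PX]

lemma lintegral_seqDecoderErrorBound_le (hD : MeasurableSet D) (j : Fin M) :
    ∫⁻ c, seqDecoderErrorBound κ D c j ∂(Measure.pi fun _ => PX) ≤
      (PX ⊗ₘ κ) Dᶜ + ∫⁻ y, min 1 ((j : ℕ) * PX {x | (x, y) ∈ D}) ∂(κ ∘ₘ PX) := by
  have hmiss : ∫⁻ c, κ (c j) (Prod.mk (c j) ⁻¹' Dᶜ) ∂(Measure.pi fun _ => PX) =
      (PX ⊗ₘ κ) Dᶜ := by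
    rw [Measure.compProd_apply hD.compl]
    exact (measurePreserving_eval (fun _ => PX) j).lintegral_comp
      (κ.measurable_kernel_prodMk_left hD.compl)
  have hEj (c : Fin M → A) (x : A) :
      {y | ∃ i ∈ Finset.Iio j, (Function.update c j x i, y) ∈ D} =
        {y | ∃ i ∈ Finset.Iio j, (c i, y) ∈ D} := by
    ext y
    show (∃ i ∈ Finset.Iio j, _) ↔ ∃ i ∈ Finset.Iio j, _
    refine exists_congr fun i => and_congr_right fun hi => ?_
    rw [Function.update_of_ne (Finset.mem_Iio.1 hi).ne]
  unfold seqDecoderErrorBound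
  rw [lintegral_add_left (f := fun c : Fin M → A => κ (c j) (Prod.mk (c j) ⁻¹' Dᶜ))
    ((κ.measurable_kernel_prodMk_left hD.compl).comp (measurable_pi_apply j)), hmiss]
  gcongr
  refine (lintegral_kernel_eval_pi_eq κ (measurableSet_exists_lt hD j) hEj).trans_le
    (lintegral_mono fun y => ?_)
  rw [← Fin.card_Iio j]
  exact pi_setOf_exists_mem_le _ (measurable_prodMk_right hD)

theorem exists_codebook_sum_measure_compl_le (hD : MeasurableSet D) :
    ∃ c : Fin M → A, ∑ j, κ (c j) {y | seqDecoder D c y = some j}ᶜ ≤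
      M * seqDecodingBound κ PX M D := by
  have hsum := Finset.measurable_sum (Finset.univ : Finset (Fin M)) fun j _ =>
    measurable_seqDecoderErrorBound κ hD j
  obtain ⟨c, hc⟩ := exists_le_lintegral (μ := Measure.pi fun _ : Fin M => PX) hsum.aemeasurable
  have hV : Measurable fun y => PX {x | (x, y) ∈ D} := measurable_measure_prodMk_right hD
  refine ⟨c, ?_⟩
  calc ∑ j, κ (c j) {y | seqDecoder D c y = some j}ᶜ
      ≤ ∑ j, seqDecoderErrorBound κ D c j :=
        Finset.sum_le_sum fun j _ => measure_compl_seqDecoder_le κ c j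
    _ ≤ _ := hc
    _ ≤ ∑ j : Fin M,
          ((PX ⊗ₘ κ) Dᶜ + ∫⁻ y, min 1 ((j : ℕ) * PX {x | (x, y) ∈ D}) ∂(κ ∘ₘ PX)) := by
        rw [lintegral_finsetSum _ fun j _ => measurable_seqDecoderErrorBound κ hD j]
        exact Finset.sum_le_sum fun j _ => lintegral_seqDecoderErrorBound_le κ PX hD j
    _ ≤ M * seqDecodingBound κ PX M D := by
        rw [Finset.sum_add_distrib,
          ← lintegral_finsetSum _ fun j _ => measurable_const.min (hV.const_mul _),
          seqDecodingBound, mul_add,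
          ← lintegral_const_mul _ (measurable_const.min (hV.const_mul _))]
        simp only [Finset.sum_const, Finset.card_univ, Fintype.card_fin, nsmul_eq_mul]
        gcongr with y
        exact sum_fin_min_one_le M _

theorem exists_code_avgError_le (hM : 0 < M) (hD : MeasurableSet D) {ε : ℝ} (hε : 0 ≤ ε)
    (h : seqDecodingBound κ PX M D ≤ ENNReal.ofReal ε) :
    ∃ f : Fin M → A, ∃ g : B → Option (Fin M), Measurable g ∧ avgError κ M f g ≤ ε := by
  obtain ⟨c, hc⟩ := exists_codebook_sum_measure_compl_le κ PX hD
  exact ⟨c, seqDecoder D c, measurable_seqDecoder hD c,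
    avgError_le_of_sum_le κ hM (measurable_seqDecoder hD c) hε (hc.trans (by gcongr))⟩

end Coding

section Averaging

variable {A B : Type*} [MeasurableSpace A] [MeasurableSpace B] (κ : Kernel A B) [IsMarkovKernel κ]
  (PX : Measure A) [IsProbabilityMeasure PX] (M : ℕ) {T : A × B → ℝ}

lemma measurable_measure_setOf_lt (hT : Measurable T) :
    Measurable fun q : ℝ × B => PX {x | q.1 < T (x, q.2)} :=
  measurable_measure_prodMk_left (s := {p : (ℝ × B) × A | p.1.1 < T (p.2, p.1.2)})
    (measurableSet_lt measurable_fst.fst (hT.comp (measurable_snd.prodMk measurable_fst.snd)))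

lemma measurable_seqDecodingBound_setOf_lt (hT : Measurable T) :
    Measurable fun t : ℝ => seqDecodingBound κ PX M {z | t < T z} := by
  have hmono : Monotone fun t : ℝ => (PX ⊗ₘ κ) {z | t < T z}ᶜ :=
    fun _ _ h => measure_mono fun _ hz h' => hz (h.trans_lt h')
  exact hmono.measurable.add (Measurable.lintegral_prod_right'
    (measurable_const.min ((measurable_measure_setOf_lt PX hT).const_mul _)))

theorem exists_threshold_seqDecodingBound_le (hT : Measurable T) :
    ∃ t : ℝ, seqDecodingBound κ PX M {z | t < T z} ≤
      ∫⁻ z, ENNReal.ofReal (1 - T z) ∂(PX ⊗ₘ κ) +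
        ∫⁻ y, min 1 (ENNReal.ofReal (((M : ℝ) - 1) / 2) * ∫⁻ x, ENNReal.ofReal (T (x, y)) ∂PX)
          ∂(κ ∘ₘ PX) := by
  have : IsProbabilityMeasure (volume.restrict (Ioo (0 : ℝ) 1)) := ⟨by simp⟩
  obtain ⟨t, ht⟩ := exists_le_lintegral (μ := volume.restrict (Ioo (0 : ℝ) 1))
    (measurable_seqDecodingBound_setOf_lt κ PX M hT).aemeasurable
  refine ⟨t, ht.trans ?_⟩
  have hjoint : Measurable fun q : ℝ × B =>
      min 1 (ENNReal.ofReal (((M : ℝ) - 1) / 2) * PX {x | q.1 < T (x, q.2)}) :=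
    measurable_const.min ((measurable_measure_setOf_lt PX hT).const_mul _)
  have hfalse : Measurable fun t : ℝ => ∫⁻ y,
      min 1 (ENNReal.ofReal (((M : ℝ) - 1) / 2) * PX {x | (x, y) ∈ {z | t < T z}}) ∂(κ ∘ₘ PX) :=
    hjoint.lintegral_prod_right'
  simp only [seqDecodingBound]
  rw [lintegral_add_right _ hfalse]
  gcongr
  · simpa only [compl_ofPred, not_lt] using setLIntegral_Ioo_measure_le_le hT
  · rw [lintegral_lintegral_swap hjoint.aemeasurable]
    refine lintegral_mono fun y => (lintegral_min_one_mul_le ENNReal.ofReal_ne_top _).trans ?_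
    gcongr
    exact setLIntegral_Ioo_measure_lt_le (hT.comp measurable_prodMk_right)

lemma lintegral_min_one_le_of_mul_integral_lt_beta (PY QY : Measure B) [IsFiniteMeasure PY]
    [IsFiniteMeasure QY] (hT : Measurable T) (hT01 : ∀ z, T z ∈ Icc (0 : ℝ) 1) {k τ : ℝ}
    (hk : 0 ≤ k) (hτ : 0 ≤ τ) (h : k * ∫ z, T z ∂(PX.prod QY) < beta τ PY QY) :
    ∫⁻ y, min 1 (ENNReal.ofReal k * ∫⁻ x, ENNReal.ofReal (T (x, y)) ∂PX) ∂PY ≤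
      ENNReal.ofReal τ := by
  have hT' : Measurable fun z => ENNReal.ofReal (T z) := ENNReal.measurable_ofReal.comp hT
  refine lintegral_le_of_lintegral_lt_beta (Q := QY) hτ
    (measurable_const.min (hT'.lintegral_prod_left'.const_mul _)) (fun _ => min_le_left _ _) ?_
  calc ∫⁻ y, min 1 (ENNReal.ofReal k * ∫⁻ x, ENNReal.ofReal (T (x, y)) ∂PX) ∂QY
      ≤ ∫⁻ y, ENNReal.ofReal k * ∫⁻ x, ENNReal.ofReal (T (x, y)) ∂PX ∂QY :=
        lintegral_mono fun _ => min_le_right _ _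
    _ = ENNReal.ofReal (k * ∫ z, T z ∂(PX.prod QY)) := by
        rw [lintegral_const_mul' _ _ ENNReal.ofReal_ne_top, ← lintegral_prod_symm' _ hT',
          ← ofReal_integral_eq_lintegral_ofReal (integrable_of_mem_Icc hT hT01)
            (ae_of_all _ fun z => (hT01 z).1), ENNReal.ofReal_mul hk]
    _ < ENNReal.ofReal (beta τ PY QY) := ENNReal.ofReal_lt_ofReal_iff'.2
        ⟨h, (mul_nonneg hk (integral_nonneg fun z => (hT01 z).1)).trans_lt h⟩

end Averaging

/-- The β-β achievability bound. -/
theorem betabeta_achievability {A B : Type*} [MeasurableSpace A] [MeasurableSpace B]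
    (κ : ProbabilityTheory.Kernel A B) [ProbabilityTheory.IsMarkovKernel κ]
    (ε τ : ℝ) (hε : ε ∈ Set.Ioo (0 : ℝ) 1) (hτ : τ ∈ Set.Ioo (0 : ℝ) ε)
    (PX : Measure A) [IsProbabilityMeasure PX]
    (QY : Measure B) [IsProbabilityMeasure QY]
    (M : ℕ) (hM : 0 < M)
    (hMle : (M : ℝ) / 2 ≤ beta τ (PX.bind κ) QY / beta (1 - ε + τ) (PX.compProd κ) (PX.prod QY)) :
    ∃ f : Fin M → A, ∃ g : B → Option (Fin M), Measurable g ∧ avgError κ M f g ≤ ε := by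
  obtain ⟨hε0, -⟩ := hε
  obtain ⟨hτ0, hτε⟩ := hτ
  have hM' : (1 : ℝ) ≤ M := by exact_mod_cast hM
  have hk : 0 ≤ ((M : ℝ) - 1) / 2 := by linarith
  have hβ : ((M : ℝ) - 1) / 2 * beta (1 - ε + τ) (PX.compProd κ) (PX.prod QY) <
      beta τ (PX.bind κ) QY := by
    have hpos : 0 < beta (1 - ε + τ) (PX.compProd κ) (PX.prod QY) :=
      beta_nonneg.lt_of_ne' fun h0 => by rw [h0, div_zero] at hMle; linarith
    linarith [(le_div_iff₀ hpos).1 hMle]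
  obtain ⟨T, hT, hT01, hTP, hTQ⟩ := exists_test_mul_integral_lt hk (by linarith) hβ
  obtain ⟨t, ht⟩ := exists_threshold_seqDecodingBound_le κ PX M hT
  refine exists_code_avgError_le κ PX hM (measurableSet_lt measurable_const hT) hε0.le
    (ht.trans ?_)
  calc _ ≤ ENNReal.ofReal (ε - τ) + ENNReal.ofReal τ := by
        gcongr
        · rw [lintegral_ofReal_one_sub hT hT01]
          exact ENNReal.ofReal_le_ofReal (by linarith)
        · exact lintegral_min_one_le_of_mul_integral_lt_beta PX _ QY hT hT01 hk hτ0.le hTQ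
    _ = ENNReal.ofReal ε := by rw [← ENNReal.ofReal_add (by linarith) hτ0.le, sub_add_cancel]
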